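/- arXiv:2006.11421 — 4 statements merged into one kernel-verified Lean document; each statement's English description precedes it below -/
import Mathlib

section
/- (Discrete form of Lemma 1: ODEtoODEs solve gradient vanishing/explosion.) Let d, N be positive integers, let m ≤ N, let D_1, ..., D_m be diagonal d×d matrices whose diagonal entries all lie in {−1, +1}, let V_1, ..., V_m ∈ O(d), and let v ∈ ℝ^d. Then the backpropagation Jacobian product J = ∏_{r=1}^{m} (I_d + (1/N) D_r V_r) satisfies (1 − 1/N)^N ‖v‖₂ ≤ ‖J v‖₂ ≤ e ‖v‖₂. -/
/-!
With `c = 1/N`, each factor is `1 + c • U` for the orthogonal matrix `U = D_r V_r`, so by the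
triangle inequality it scales every vector by a factor in `[1 - c, 1 + c]`. Over `m ≤ N` factors
the scaling lies in `[(1 - c)^m, (1 + c)^m] ⊆ [(1 - 1/N)^N, (1 + 1/N)^N]`, and
`(1 + 1/N)^N ≤ e`.
-/

open Matrix

section Normed

variable {E : Type*} [SeminormedAddCommGroup E] [NormedSpace ℝ E]

lemma norm_add_smul_bounds_of_norm_eq {x y : E} (hxy : ‖y‖ = ‖x‖) {c : ℝ} (hc : 0 ≤ c) :
    (1 - c) * ‖x‖ ≤ ‖x + c • y‖ ∧ ‖x + c • y‖ ≤ (1 + c) * ‖x‖ := by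
  have hcy : ‖c • y‖ = c * ‖x‖ := by rw [norm_smul, hxy, Real.norm_of_nonneg hc]
  constructor
  · linarith [norm_sub_le_norm_add x (c • y)]
  · linarith [norm_add_le x (c • y)]

lemma norm_list_prod_apply_bounds {l : List (E →L[ℝ] E)} {a b : ℝ} (ha : 0 ≤ a) (hb : 0 ≤ b)
    (hl : ∀ T ∈ l, ∀ x, a * ‖x‖ ≤ ‖T x‖ ∧ ‖T x‖ ≤ b * ‖x‖) (x : E) :
    a ^ l.length * ‖x‖ ≤ ‖l.prod x‖ ∧ ‖l.prod x‖ ≤ b ^ l.length * ‖x‖ := by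
  induction l with
  | nil => simp
  | cons T l ih =>
    obtain ⟨ih_lower, ih_upper⟩ := ih fun S hS => hl S (List.mem_cons_of_mem T hS)
    obtain ⟨hT_lower, hT_upper⟩ := hl T List.mem_cons_self (l.prod x)
    rw [List.prod_cons, mul_apply_eq_comp, List.length_cons, pow_succ', pow_succ',
      mul_assoc, mul_assoc]
    exact ⟨(mul_le_mul_of_nonneg_left ih_lower ha).trans hT_lower,
      hT_upper.trans (mul_le_mul_of_nonneg_left ih_upper hb)⟩

end Normed

lemma norm_one_add_smul_unitary_apply_bounds {H : Type*} [NormedAddCommGroup H]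
    [InnerProductSpace ℝ H] [CompleteSpace H] {U : H →L[ℝ] H} (hU : U ∈ unitary (H →L[ℝ] H))
    {c : ℝ} (hc : 0 ≤ c) (x : H) :
    (1 - c) * ‖x‖ ≤ ‖(1 + c • U) x‖ ∧ ‖(1 + c • U) x‖ ≤ (1 + c) * ‖x‖ :=
  norm_add_smul_bounds_of_norm_eq (ContinuousLinearMap.norm_map_of_mem_unitary hU x) hc

lemma Matrix.mem_unitary_of_transpose_mul_self {n R : Type*} [Fintype n] [DecidableEq n]
    [CommRing R] [StarRing R] [TrivialStar R] {A : Matrix n n R} (hA : Aᵀ * A = 1) :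
    A ∈ unitary (Matrix n n R) := by
  rwa [← Matrix.unitaryGroup, mem_unitaryGroup_iff', star_eq_conjTranspose,
    conjTranspose_eq_transpose_of_trivial]

lemma Matrix.diagonal_mem_unitary {n R : Type*} [Fintype n] [DecidableEq n] [CommRing R]
    [StarRing R] [TrivialStar R] {s : n → R} (hs : ∀ i, s i * s i = 1) :
    diagonal s ∈ unitary (Matrix n n R) :=
  mem_unitary_of_transpose_mul_self <| by
    rw [diagonal_transpose, diagonal_mul_diagonal, funext hs, diagonal_one]

theorem stmt3_general (d N m : ℕ) (hN : 0 < N) (hm : m ≤ N)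
    (D V : Fin m → Matrix (Fin d) (Fin d) ℝ)
    (hD : ∀ r, ∃ ds : Fin d → ℝ, (∀ i, ds i = 1 ∨ ds i = -1) ∧ D r = Matrix.diagonal ds)
    (hV : ∀ r, (V r)ᵀ * V r = 1)
    (v : EuclideanSpace ℝ (Fin d)) :
    (1 - (N : ℝ)⁻¹) ^ N * ‖v‖ ≤
        ‖Matrix.toEuclideanLin (((List.finRange m).map
            (fun r => (1 : Matrix (Fin d) (Fin d) ℝ) + (N : ℝ)⁻¹ • (D r * V r))).prod) v‖
    ∧ ‖Matrix.toEuclideanLin (((List.finRange m).map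
            (fun r => (1 : Matrix (Fin d) (Fin d) ℝ) + (N : ℝ)⁻¹ • (D r * V r))).prod) v‖
        ≤ Real.exp 1 * ‖v‖ := by
  set c : ℝ := (N : ℝ)⁻¹
  have hc0 : 0 ≤ c := by positivity
  have hc1 : c ≤ 1 := inv_le_one_of_one_le₀ (by exact_mod_cast hN)
  have hD_unitary : ∀ r, D r ∈ unitary (Matrix (Fin d) (Fin d) ℝ) := fun r => by
    obtain ⟨ds, hds, hDr⟩ := hD r
    rw [hDr]
    exact diagonal_mem_unitary fun i => by rcases hds i with h | h <;> simp [h]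
  have hU : ∀ r, toEuclideanCLM (𝕜 := ℝ) (D r * V r) ∈ unitary _ := fun r =>
    Unitary.map_mem _ (mul_mem (hD_unitary r) (mem_unitary_of_transpose_mul_self (hV r)))
  have hJ : toEuclideanLin (((List.finRange m).map fun r => 1 + c • (D r * V r)).prod) v =
      ((List.finRange m).map fun r => 1 + c • toEuclideanCLM (𝕜 := ℝ) (D r * V r)).prod v := by
    rw [← coe_toEuclideanCLM_eq_toEuclideanLin, map_list_prod, List.map_map]
    simp [Function.comp_def]
  obtain ⟨hlower, hupper⟩ := norm_list_prod_apply_bounds (a := 1 - c) (b := 1 + c)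
    (by linarith) (by linarith) (fun T hT => by
      obtain ⟨r, -, rfl⟩ := List.mem_map.1 hT
      exact norm_one_add_smul_unitary_apply_bounds (hU r) hc0) v
  rw [List.length_map, List.length_finRange, ← hJ] at hlower hupper
  refine ⟨le_trans ?_ hlower, hupper.trans ?_⟩
  · exact mul_le_mul_of_nonneg_right
      (pow_le_pow_of_le_one (by linarith) (by linarith) hm) (norm_nonneg v)
  · refine mul_le_mul_of_nonneg_right ?_ (norm_nonneg v)
    calc (1 + c) ^ m ≤ (1 + c) ^ N := pow_le_pow_right₀ (by linarith) hm
      _ ≤ Real.exp 1 := Real.one_add_inv_pow_le_exp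

/-- Discrete form of Lemma 1 (ODEtoODEs solve the gradient vanishing/explosion problem):
for diagonal matrices `D_r` with `±1` entries and `V_r ∈ O(d)`, the backpropagation
Jacobian product `J = ∏_{r=1}^m (I + (1/N) D_r V_r)` satisfies
`(1 - 1/N)^N ‖v‖₂ ≤ ‖J v‖₂ ≤ e ‖v‖₂`. -/
theorem stmt3 (d N m : ℕ) (hd : 0 < d) (hN : 0 < N) (hm : m ≤ N)
    (D V : Fin m → Matrix (Fin d) (Fin d) ℝ)
    (hD : ∀ r, ∃ ds : Fin d → ℝ, (∀ i, ds i = 1 ∨ ds i = -1) ∧ D r = Matrix.diagonal ds)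
    (hV : ∀ r, (V r)ᵀ * V r = 1)
    (v : EuclideanSpace ℝ (Fin d)) :
    (1 - (N : ℝ)⁻¹) ^ N * ‖v‖ ≤
        ‖Matrix.toEuclideanLin (((List.finRange m).map
            (fun r => (1 : Matrix (Fin d) (Fin d) ℝ) + (N : ℝ)⁻¹ • (D r * V r))).prod) v‖
    ∧ ‖Matrix.toEuclideanLin (((List.finRange m).map
            (fun r => (1 : Matrix (Fin d) (Fin d) ℝ) + (N : ℝ)⁻¹ • (D r * V r))).prod) v‖
        ≤ Real.exp 1 * ‖v‖ :=
  stmt3_general d N m hN hm D V hD hV v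
end

section
/- Let A, B ∈ ℝ^{d×d} be skew-symmetric matrices (Aᵀ = −A, Bᵀ = −B). Then the matrix exponentials satisfy ‖exp(A) − exp(B)‖₂ ≤ ‖A − B‖₂. -/
/-!
Duhamel's formula writes `exp a - exp b` as `∫₀¹ exp (s • a) * (a - b) * exp ((1 - s) • b) ds`,
the integral of the derivative of `s ↦ exp (s • a) * exp ((1 - s) • b)`. For skew-adjoint `a`, `b`
the two outer factors are unitary, so in a C⋆-algebra the integrand has norm exactly `‖a - b‖`.
The spectral norm makes real matrices a C⋆-algebra in which skew-symmetric means skew-adjoint.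
-/

open Matrix

/-- The spectral (operator 2-) norm of a real matrix. -/
noncomputable def specNorm {p q : ℕ} (A : Matrix (Fin p) (Fin q) ℝ) : ℝ :=
  ‖LinearMap.toContinuousLinearMap (Matrix.toEuclideanLin A)‖

open NormedSpace

section ExpDifference

variable {𝔸 : Type*} [NormedRing 𝔸] [NormedAlgebra ℝ 𝔸] [CompleteSpace 𝔸]

theorem hasDerivAt_exp_smul_mul_exp_one_sub_smul (a b : 𝔸) (s : ℝ) :
    HasDerivAt (fun t : ℝ => exp (t • a) * exp ((1 - t) • b))
      (exp (s • a) * (a - b) * exp ((1 - s) • b)) s := by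
  have hb : HasDerivAt (fun t : ℝ => exp ((1 - t) • b)) (-(b * exp ((1 - s) • b))) s := by
    simpa [Function.comp_def] using
      (hasDerivAt_exp_smul_const' b (1 - s)).scomp s ((hasDerivAt_id s).const_sub 1)
  refine ((hasDerivAt_exp_smul_const a s).mul hb).congr_deriv ?_
  noncomm_ring

theorem exp_sub_exp_eq_integral (a b : 𝔸) :
    exp a - exp b = ∫ s in (0 : ℝ)..1, exp (s • a) * (a - b) * exp ((1 - s) • b) := by
  have hcont : Continuous fun s : ℝ => exp (s • a) * (a - b) * exp ((1 - s) • b) :=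
    continuous_iff_continuousAt.2 fun s =>
      ((hasDerivAt_exp_smul_const a s).continuousAt.mul continuousAt_const).mul
        ((hasDerivAt_exp_smul_const b (1 - s)).continuousAt.comp
          (continuous_const.sub continuous_id).continuousAt)
  rw [intervalIntegral.integral_eq_sub_of_hasDerivAt
    (fun s _ => hasDerivAt_exp_smul_mul_exp_one_sub_smul a b s) (hcont.intervalIntegrable 0 1)]
  simp [exp_zero]

variable [StarRing 𝔸] [ContinuousStar 𝔸]

theorem exp_mem_unitary_of_mem_skewAdjoint_real {x : 𝔸} (hx : x ∈ skewAdjoint 𝔸) :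
    exp x ∈ unitary 𝔸 :=
  let +nondep : NormedAlgebra ℚ 𝔸 := .restrictScalars ℚ ℝ 𝔸
  exp_mem_unitary_of_mem_skewAdjoint hx

variable [CStarRing 𝔸] [StarModule ℝ 𝔸]

theorem norm_exp_sub_exp_le_of_mem_skewAdjoint {a b : 𝔸} (ha : a ∈ skewAdjoint 𝔸)
    (hb : b ∈ skewAdjoint 𝔸) : ‖exp a - exp b‖ ≤ ‖a - b‖ := by
  have hintegrand (s : ℝ) : ‖exp (s • a) * (a - b) * exp ((1 - s) • b)‖ = ‖a - b‖ := by
    rw [CStarRing.norm_mul_mem_unitary _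
        (exp_mem_unitary_of_mem_skewAdjoint_real (skewAdjoint.smul_mem _ hb)),
      CStarRing.norm_mem_unitary_mul _
        (exp_mem_unitary_of_mem_skewAdjoint_real (skewAdjoint.smul_mem _ ha))]
  rw [exp_sub_exp_eq_integral]
  simpa using intervalIntegral.norm_integral_le_of_norm_le_const
    (a := (0 : ℝ)) (b := 1) fun s _ => (hintegrand s).le

end ExpDifference

theorem Matrix.mem_skewAdjoint_of_transpose_eq_neg {n R : Type*} [AddCommGroup R]
    [StarAddMonoid R] [TrivialStar R] {A : Matrix n n R} (hA : Aᵀ = -A) :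
    A ∈ skewAdjoint (Matrix n n R) := by
  rw [skewAdjoint.mem_iff, star_eq_conjTranspose, conjTranspose_eq_transpose_of_trivial, hA]

open scoped Matrix.Norms.L2Operator

theorem specNorm_eq_l2_opNorm {n : ℕ} (A : Matrix (Fin n) (Fin n) ℝ) : specNorm A = ‖A‖ := rfl

/-- The matrix exponential is 1-Lipschitz (in spectral norm) on skew-symmetric matrices:
`‖exp(A) - exp(B)‖₂ ≤ ‖A - B‖₂`. -/
theorem stmt5 (d : ℕ) (A B : Matrix (Fin d) (Fin d) ℝ)
    (hA : Aᵀ = -A) (hB : Bᵀ = -B) :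
    specNorm (NormedSpace.exp A - NormedSpace.exp B) ≤ specNorm (A - B) := by
  rw [specNorm_eq_l2_opNorm, specNorm_eq_l2_opNorm]
  exact norm_exp_sub_exp_le_of_mem_skewAdjoint (mem_skewAdjoint_of_transpose_eq_neg hA)
    (mem_skewAdjoint_of_transpose_eq_neg hB)
end

section
/- Let N be a positive integer and D_b > 0. Let f: ℝ → ℝ be 1-Lipschitz with f(0) = 0, applied coordinatewise to vectors. Let Ω₁ ∈ ℝ^{n×d} and Ω₂ ∈ ℝ^{m×n} have spectral norm at most 1 (e.g. Stiefel matrices), let W_1, ..., W_N ∈ O(n), and let b ∈ ℝ^n with ‖b‖₂ ≤ D_b. For s ∈ ℝ^d define the policy g(s) = Ω₂ x_N where x₀ = Ω₁ s and x_i = x_{i−1} + (1/N) f(W_i x_{i−1} + b) for i = 1, ..., N. Then ‖g(s)‖₂ ≤ e ‖s‖₂ + (e − 1) D_b. -/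
open Matrix

/-- Coordinatewise application of a scalar function to a Euclidean vector. -/
def emap {n : ℕ} (f : ℝ → ℝ) (y : EuclideanSpace ℝ (Fin n)) : EuclideanSpace ℝ (Fin n) :=
  WithLp.toLp 2 (fun j => f (y j))

/-!
Each residual step `x ↦ x + N⁻¹ f(W x + b)` with `W` orthogonal and `f` a 1-Lipschitz map fixing `0`
grows `‖x‖ + D_b` by at most the factor `1 + N⁻¹`, since `‖f(W x + b)‖ ≤ ‖W x‖ + ‖b‖ = ‖x‖ + ‖b‖`.
After `N` steps this gives the factor `(1 + N⁻¹)^N ≤ e`, and `Ω₁`, `Ω₂` do not increase norms.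
-/

lemma norm_toEuclideanLin_le_of_specNorm_le_one {p q : ℕ} {A : Matrix (Fin p) (Fin q) ℝ}
    (hA : specNorm A ≤ 1) (v : EuclideanSpace ℝ (Fin q)) : ‖Matrix.toEuclideanLin A v‖ ≤ ‖v‖ :=
  calc ‖Matrix.toEuclideanLin A v‖ ≤ specNorm A * ‖v‖ :=
        (LinearMap.toContinuousLinearMap (Matrix.toEuclideanLin A)).le_opNorm v
    _ ≤ ‖v‖ := mul_le_of_le_one_left (norm_nonneg v) hA

lemma norm_toEuclideanLin_of_transpose_mul_self {ι : Type*} [Fintype ι] [DecidableEq ι]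
    {A : Matrix ι ι ℝ} (hA : Aᵀ * A = 1) (x : EuclideanSpace ℝ ι) :
    ‖Matrix.toEuclideanLin A x‖ = ‖x‖ := by
  have hinner : inner ℝ (Matrix.toEuclideanLin A x) (Matrix.toEuclideanLin A x) = inner ℝ x x := by
    rw [← LinearMap.adjoint_inner_right, ← Matrix.toEuclideanLin_conjTranspose_eq_adjoint,
      conjTranspose_eq_transpose_of_trivial, toLpLin_apply, toLpLin_apply,
      mulVec_mulVec, hA, one_mulVec]
  simpa only [real_inner_self_eq_norm_sq, sq_eq_sq₀ (norm_nonneg _) (norm_nonneg _)] using hinner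

lemma norm_emap_le {n : ℕ} {f : ℝ → ℝ} (hf : LipschitzWith 1 f) (hf0 : f 0 = 0)
    (y : EuclideanSpace ℝ (Fin n)) : ‖emap f y‖ ≤ ‖y‖ := by
  rw [EuclideanSpace.norm_eq, EuclideanSpace.norm_eq]
  gcongr with j
  have hj : |f (y j)| ≤ |y j| := by simpa [hf0, Real.dist_eq] using hf.dist_le_mul (y j) 0
  simpa [emap, Real.norm_eq_abs] using hj

lemma norm_residualStep_add_le {n : ℕ} {f : ℝ → ℝ} (hf : LipschitzWith 1 f) (hf0 : f 0 = 0)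
    {W : Matrix (Fin n) (Fin n) ℝ} (hW : Wᵀ * W = 1) {b : EuclideanSpace ℝ (Fin n)} {D : ℝ}
    (hb : ‖b‖ ≤ D) {h : ℝ} (hh : 0 ≤ h) (x : EuclideanSpace ℝ (Fin n)) :
    ‖x + h • emap f (Matrix.toEuclideanLin W x + b)‖ + D ≤ (1 + h) * (‖x‖ + D) := by
  have hstep : ‖emap f (Matrix.toEuclideanLin W x + b)‖ ≤ ‖x‖ + D :=
    calc ‖emap f (Matrix.toEuclideanLin W x + b)‖ ≤ ‖Matrix.toEuclideanLin W x + b‖ :=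
          norm_emap_le hf hf0 _
      _ ≤ ‖Matrix.toEuclideanLin W x‖ + ‖b‖ := norm_add_le _ _
      _ ≤ ‖x‖ + D := by rw [norm_toEuclideanLin_of_transpose_mul_self hW]; linarith
  calc ‖x + h • emap f (Matrix.toEuclideanLin W x + b)‖ + D
      ≤ ‖x‖ + h * ‖emap f (Matrix.toEuclideanLin W x + b)‖ + D := by
        grw [norm_add_le, norm_smul, Real.norm_of_nonneg hh]
    _ ≤ (1 + h) * (‖x‖ + D) := by nlinarith

theorem stmt9_general (n d m N : ℕ) (Db : ℝ)
    (f : ℝ → ℝ) (hf : LipschitzWith 1 f) (hf0 : f 0 = 0)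
    (Ω₁ : Matrix (Fin n) (Fin d) ℝ) (Ω₂ : Matrix (Fin m) (Fin n) ℝ)
    (hΩ₁ : specNorm Ω₁ ≤ 1) (hΩ₂ : specNorm Ω₂ ≤ 1)
    (W : ℕ → Matrix (Fin n) (Fin n) ℝ)
    (hW : ∀ i : ℕ, 1 ≤ i → i ≤ N → (W i)ᵀ * W i = 1)
    (b : EuclideanSpace ℝ (Fin n)) (hb : ‖b‖ ≤ Db)
    (s : EuclideanSpace ℝ (Fin d))
    (x : ℕ → EuclideanSpace ℝ (Fin n))
    (hx0 : x 0 = Matrix.toEuclideanLin Ω₁ s)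
    (hrec : ∀ i : ℕ, i < N →
      x (i + 1) = x i + (N : ℝ)⁻¹ • emap f (Matrix.toEuclideanLin (W (i + 1)) (x i) + b)) :
    ‖Matrix.toEuclideanLin Ω₂ (x N)‖ ≤ Real.exp 1 * ‖s‖ + (Real.exp 1 - 1) * Db := by
  have hgrowth : ‖x N‖ + Db ≤ (1 + (N : ℝ)⁻¹) ^ N * (‖x 0‖ + Db) :=
    le_geom (u := fun i => ‖x i‖ + Db) (by positivity) N fun i hi => by
      simpa only [hrec i hi] using norm_residualStep_add_le hf hf0 (hW (i + 1) (by omega) hi) hb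
        (by positivity) (x i)
  have hx0s : ‖x 0‖ ≤ ‖s‖ := hx0 ▸ norm_toEuclideanLin_le_of_specNorm_le_one hΩ₁ s
  have hDb : 0 ≤ ‖s‖ + Db := by linarith [norm_nonneg s, norm_nonneg b]
  calc ‖Matrix.toEuclideanLin Ω₂ (x N)‖ ≤ ‖x N‖ := norm_toEuclideanLin_le_of_specNorm_le_one hΩ₂ _
    _ ≤ (1 + (N : ℝ)⁻¹) ^ N * (‖s‖ + Db) - Db := by grw [← hx0s]; linarith
    _ ≤ Real.exp 1 * (‖s‖ + Db) - Db := by grw [Real.one_add_inv_pow_le_exp]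
    _ = Real.exp 1 * ‖s‖ + (Real.exp 1 - 1) * Db := by ring

/-- Output bound (eq. (sbound) of Lemma 2): the discretized ODEtoODE policy
`g(s) = Ω₂ x_N`, `x₀ = Ω₁ s`, `x_i = x_{i-1} + (1/N) f(W_i x_{i-1} + b)` satisfies
`‖g(s)‖₂ ≤ e ‖s‖₂ + (e - 1) D_b`. -/
theorem stmt9 (n d m N : ℕ) (hN : 0 < N) (Db : ℝ) (hDb : 0 < Db)
    (f : ℝ → ℝ) (hf : LipschitzWith 1 f) (hf0 : f 0 = 0)
    (Ω₁ : Matrix (Fin n) (Fin d) ℝ) (Ω₂ : Matrix (Fin m) (Fin n) ℝ)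
    (hΩ₁ : specNorm Ω₁ ≤ 1) (hΩ₂ : specNorm Ω₂ ≤ 1)
    (W : ℕ → Matrix (Fin n) (Fin n) ℝ)
    (hW : ∀ i : ℕ, 1 ≤ i → i ≤ N → (W i)ᵀ * W i = 1)
    (b : EuclideanSpace ℝ (Fin n)) (hb : ‖b‖ ≤ Db)
    (s : EuclideanSpace ℝ (Fin d))
    (x : ℕ → EuclideanSpace ℝ (Fin n))
    (hx0 : x 0 = Matrix.toEuclideanLin Ω₁ s)
    (hrec : ∀ i : ℕ, i < N →
      x (i + 1) = x i + (N : ℝ)⁻¹ • emap f (Matrix.toEuclideanLin (W (i + 1)) (x i) + b)) :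
    ‖Matrix.toEuclideanLin Ω₂ (x N)‖ ≤ Real.exp 1 * ‖s‖ + (Real.exp 1 - 1) * Db :=
  stmt9_general n d m N Db f hf hf0 Ω₁ Ω₂ hΩ₁ hΩ₂ W hW b hb s x hx0 hrec
end

section
/- Let N be a positive integer. Let f: ℝ → ℝ be 1-Lipschitz, applied coordinatewise to vectors. Let Ω₁ ∈ ℝ^{n×d} and Ω₂ ∈ ℝ^{m×n} have spectral norm at most 1, let W_1, ..., W_N ∈ O(n), and let b ∈ ℝ^n. For s ∈ ℝ^d define g(s) = Ω₂ x_N where x₀ = Ω₁ s and x_i = x_{i−1} + (1/N) f(W_i x_{i−1} + b) for i = 1, ..., N. Then for all s′, s″ ∈ ℝ^d: ‖g(s′) − g(s″)‖₂ ≤ (1 + 1/N)^N ‖s′ − s″‖₂ ≤ e ‖s′ − s″‖₂. -/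
/-!
Each explicit Euler step `z ↦ z + N⁻¹ • f(W z + b)` is `(1 + N⁻¹)`-Lipschitz, because an orthogonal
`W` has spectral norm at most `1` and `f` acts coordinatewise as a `1`-Lipschitz map. Since `Ω₁`
and `Ω₂` are `1`-Lipschitz too, `N` steps give the factor `(1 + N⁻¹) ^ N ≤ e`.
-/

open Matrix

open scoped NNReal

open scoped Matrix.Norms.L2Operator in
theorem specNorm_le_one_of_transpose_mul_self_eq_one {n : ℕ} {M : Matrix (Fin n) (Fin n) ℝ}
    (hM : Mᵀ * M = 1) : specNorm M ≤ 1 := by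
  -- `specNorm M` is the L² operator norm `‖M‖`, which satisfies the C⋆-identity `‖Mᴴ M‖ = ‖M‖²`.
  have hsq : specNorm M * specNorm M = ‖(1 : Matrix (Fin n) (Fin n) ℝ)‖ := by
    rw [← hM, ← conjTranspose_eq_transpose_of_trivial, l2_opNorm_conjTranspose_mul_self]
    rfl
  have hone : ‖(1 : Matrix (Fin n) (Fin n) ℝ)‖ ≤ 1 :=
    ContinuousLinearMap.opNorm_le_bound _ zero_le_one fun v => by simp
  nlinarith [(norm_nonneg _ : 0 ≤ specNorm M)]

theorem lipschitzWith_toEuclideanLin_of_specNorm_le_one {p q : ℕ}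
    {A : Matrix (Fin p) (Fin q) ℝ} (hA : specNorm A ≤ 1) : LipschitzWith 1 (toEuclideanLin A) :=
  (LinearMap.toContinuousLinearMap (toEuclideanLin A)).lipschitz.weaken hA

theorem LipschitzWith.emap {n : ℕ} {K : ℝ≥0} {f : ℝ → ℝ} (hf : LipschitzWith K f) :
    LipschitzWith K (emap (n := n) f) := by
  refine LipschitzWith.of_dist_le_mul fun y z => ?_
  simp only [EuclideanSpace.dist_eq]
  calc √(∑ j, dist (f (y j)) (f (z j)) ^ 2) ≤ √(∑ j, (K * dist (y j) (z j)) ^ 2) := by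
        gcongr with j
        exact hf.dist_le_mul _ _
    _ = K * √(∑ j, dist (y j) (z j) ^ 2) := by
        simp_rw [mul_pow, ← Finset.mul_sum]
        rw [Real.sqrt_mul (by positivity), Real.sqrt_sq K.coe_nonneg]

theorem LipschitzWith.id_add_smul {E : Type*} [SeminormedAddCommGroup E] [NormedSpace ℝ E]
    {K : ℝ≥0} {F : E → E} (hF : LipschitzWith K F) (c : ℝ) :
    LipschitzWith (1 + ‖c‖₊ * K) fun x => x + c • F x :=
  LipschitzWith.id.add ((lipschitzWith_smul c).comp hF)

theorem dist_le_pow_mul_of_lipschitzWith_step {α : Type*} [PseudoMetricSpace α] {K : ℝ≥0}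
    {N : ℕ} {φ : ℕ → α → α} (hφ : ∀ i < N, LipschitzWith K (φ i)) {x y : ℕ → α}
    (hx : ∀ i < N, x (i + 1) = φ i (x i)) (hy : ∀ i < N, y (i + 1) = φ i (y i)) :
    dist (x N) (y N) ≤ K ^ N * dist (x 0) (y 0) := by
  induction N with
  | zero => simp
  | succ N ih =>
    calc dist (x (N + 1)) (y (N + 1)) ≤ K * dist (x N) (y N) := by
          rw [hx N N.lt_succ_self, hy N N.lt_succ_self]
          exact (hφ N N.lt_succ_self).dist_le_mul _ _
      _ ≤ K * (K ^ N * dist (x 0) (y 0)) := by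
          gcongr
          exact ih (fun i hi => hφ i (by omega)) (fun i hi => hx i (by omega))
            (fun i hi => hy i (by omega))
      _ = K ^ (N + 1) * dist (x 0) (y 0) := by ring

theorem stmt10_general (n d m N : ℕ)
    (f : ℝ → ℝ) (hf : LipschitzWith 1 f)
    (Ω₁ : Matrix (Fin n) (Fin d) ℝ) (Ω₂ : Matrix (Fin m) (Fin n) ℝ)
    (hΩ₁ : specNorm Ω₁ ≤ 1) (hΩ₂ : specNorm Ω₂ ≤ 1)
    (W : ℕ → Matrix (Fin n) (Fin n) ℝ)
    (hW : ∀ i : ℕ, 1 ≤ i → i ≤ N → (W i)ᵀ * W i = 1)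
    (b : EuclideanSpace ℝ (Fin n))
    (s' s'' : EuclideanSpace ℝ (Fin d))
    (x' x'' : ℕ → EuclideanSpace ℝ (Fin n))
    (hx0' : x' 0 = Matrix.toEuclideanLin Ω₁ s')
    (hx0'' : x'' 0 = Matrix.toEuclideanLin Ω₁ s'')
    (hrec' : ∀ i : ℕ, i < N →
      x' (i + 1) = x' i + (N : ℝ)⁻¹ • emap f (Matrix.toEuclideanLin (W (i + 1)) (x' i) + b))
    (hrec'' : ∀ i : ℕ, i < N →
      x'' (i + 1) = x'' i + (N : ℝ)⁻¹ • emap f (Matrix.toEuclideanLin (W (i + 1)) (x'' i) + b)) :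
    ‖Matrix.toEuclideanLin Ω₂ (x' N) - Matrix.toEuclideanLin Ω₂ (x'' N)‖
        ≤ (1 + (N : ℝ)⁻¹) ^ N * ‖s' - s''‖
    ∧ (1 + (N : ℝ)⁻¹) ^ N * ‖s' - s''‖ ≤ Real.exp 1 * ‖s' - s''‖ := by
  have hstep : ∀ i < N, LipschitzWith (1 + ‖(N : ℝ)⁻¹‖₊)
      fun z => z + (N : ℝ)⁻¹ • emap f (toEuclideanLin (W (i + 1)) z + b) := fun i hi =>
    have hWi := lipschitzWith_toEuclideanLin_of_specNorm_le_one
      (specNorm_le_one_of_transpose_mul_self_eq_one (hW (i + 1) (by omega) hi))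
    ((hf.emap.comp ((IsometryEquiv.addRight b).isometry.lipschitz.comp hWi)).id_add_smul _).weaken
      (by simp)
  have hK : ((1 + ‖(N : ℝ)⁻¹‖₊ : ℝ≥0) : ℝ) = 1 + (N : ℝ)⁻¹ := by simp
  have hx := dist_le_pow_mul_of_lipschitzWith_step hstep hrec' hrec''
  rw [hK, hx0', hx0''] at hx
  refine ⟨?_, mul_le_mul_of_nonneg_right Real.one_add_inv_pow_le_exp (norm_nonneg _)⟩
  rw [← dist_eq_norm, ← dist_eq_norm]
  calc dist (toEuclideanLin Ω₂ (x' N)) (toEuclideanLin Ω₂ (x'' N))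
      ≤ dist (x' N) (x'' N) := by
        simpa using (lipschitzWith_toEuclideanLin_of_specNorm_le_one hΩ₂).dist_le_mul _ _
    _ ≤ (1 + (N : ℝ)⁻¹) ^ N * dist (toEuclideanLin Ω₁ s') (toEuclideanLin Ω₁ s'') := hx
    _ ≤ (1 + (N : ℝ)⁻¹) ^ N * dist s' s'' := by
        gcongr
        simpa using (lipschitzWith_toEuclideanLin_of_specNorm_le_one hΩ₁).dist_le_mul _ _

/-- Input-Lipschitz bound (eq. (bnd1) of Lemma 2) for the discretized ODEtoODE policy:
`‖g(s') - g(s'')‖₂ ≤ (1 + 1/N)^N ‖s' - s''‖₂ ≤ e ‖s' - s''‖₂`. -/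
theorem stmt10 (n d m N : ℕ) (hN : 0 < N)
    (f : ℝ → ℝ) (hf : LipschitzWith 1 f)
    (Ω₁ : Matrix (Fin n) (Fin d) ℝ) (Ω₂ : Matrix (Fin m) (Fin n) ℝ)
    (hΩ₁ : specNorm Ω₁ ≤ 1) (hΩ₂ : specNorm Ω₂ ≤ 1)
    (W : ℕ → Matrix (Fin n) (Fin n) ℝ)
    (hW : ∀ i : ℕ, 1 ≤ i → i ≤ N → (W i)ᵀ * W i = 1)
    (b : EuclideanSpace ℝ (Fin n))
    (s' s'' : EuclideanSpace ℝ (Fin d))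
    (x' x'' : ℕ → EuclideanSpace ℝ (Fin n))
    (hx0' : x' 0 = Matrix.toEuclideanLin Ω₁ s')
    (hx0'' : x'' 0 = Matrix.toEuclideanLin Ω₁ s'')
    (hrec' : ∀ i : ℕ, i < N →
      x' (i + 1) = x' i + (N : ℝ)⁻¹ • emap f (Matrix.toEuclideanLin (W (i + 1)) (x' i) + b))
    (hrec'' : ∀ i : ℕ, i < N →
      x'' (i + 1) = x'' i + (N : ℝ)⁻¹ • emap f (Matrix.toEuclideanLin (W (i + 1)) (x'' i) + b)) :
    ‖Matrix.toEuclideanLin Ω₂ (x' N) - Matrix.toEuclideanLin Ω₂ (x'' N)‖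
        ≤ (1 + (N : ℝ)⁻¹) ^ N * ‖s' - s''‖
    ∧ (1 + (N : ℝ)⁻¹) ^ N * ‖s' - s''‖ ≤ Real.exp 1 * ‖s' - s''‖ :=
  stmt10_general n d m N f hf Ω₁ Ω₂ hΩ₁ hΩ₂ W hW b s' s'' x' x'' hx0' hx0'' hrec' hrec''
end
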